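/- Let G be a Class 2 graph with critical edge e₁ = xy₁, let φ be a proper Δ-edge-coloring of G − e₁, and let F = (x, e₁, y₁, …, e_p, y_p) be a multi-fan at x with respect to e₁ and φ. Then V(F) is φ-elementary, i.e., the missing color sets of distinct vertices of F are pairwise disjoint. -/

import Mathlib

open SimpleGraph

/-- A proper `k`-edge-coloring of `G` with colors in `{1,…,k}`: every edge receives a color
in `{1,…,k}` and distinct edges sharing a vertex receive distinct colors. -/
def IsProperEdgeColoring {V : Type*} (G : SimpleGraph V) (k : ℕ) (c : Sym2 V → ℕ) : Prop :=
  (∀ e ∈ G.edgeSet, c e ∈ Finset.Icc 1 k) ∧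
  ∀ e ∈ G.edgeSet, ∀ f ∈ G.edgeSet, e ≠ f → (∃ v, v ∈ e ∧ v ∈ f) → c e ≠ c f

/-- `G` admits a proper `k`-edge-coloring. -/
def EdgeColorable {V : Type*} (G : SimpleGraph V) (k : ℕ) : Prop :=
  ∃ c, IsProperEdgeColoring G k c

/-- The chromatic index of `G`: the least `k` such that `G` is `k`-edge-colorable. -/
noncomputable def chromIndex {V : Type*} (G : SimpleGraph V) : ℕ :=
  sInf {k | EdgeColorable G k}


/-- The set of colors of `{1,…,k}` missing at `v` under the coloring `c`, i.e. not assigned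
to any edge of `G` incident with `v`. -/
def missing {V : Type*} (G : SimpleGraph V) (k : ℕ) (c : Sym2 V → ℕ) (v : V) : Set ℕ :=
  {α | α ∈ Finset.Icc 1 k ∧ ¬ ∃ u, G.Adj v u ∧ c s(v, u) = α}

/-!
Write `H = G - x y₀`. First, no colour `β` is missing in `H` at both `x` and a fan vertex `y i`:
for `i = 0`, giving `x y₀` the colour `β` would colour `G` with `Δ` colours; otherwise recolour
`x (y i)` with `β`, after which its old colour is missing at `x` and at some earlier `y j`, and
induct on `i`.

Then induct on the length of the fan. Suppose the last vertex `y b` and an earlier `y a` both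
miss `α`, and let `β` be missing at `x`; by induction no other earlier fan vertex misses `α`. If a
fan vertex `y m` missing `α` were off the `α/β`-chain through `x`, interchanging `α` and `β` on its
own chain would keep the fan up to `y m` and make `β` missing at both `y m` and `x`, contradicting
the first step. Applied to `y a` and then to `y b`, this puts both on the chain through `x`. But
each of `x`, `y a`, `y b` misses `α` or `β`, so that chain would be a path with three ends.
-/

section EdgeColoring

variable {V : Type*} {G G' : SimpleGraph V} {k : ℕ} {c c' : Sym2 V → ℕ}

theorem isProperEdgeColoring_iff :
    IsProperEdgeColoring G k c ↔ (∀ e ∈ G.edgeSet, c e ∈ Finset.Icc 1 k) ∧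
      ∀ ⦃z a b⦄, G.Adj z a → G.Adj z b → a ≠ b → c s(z, a) ≠ c s(z, b) := by
  refine and_congr_right fun _ => ⟨fun h z a b ha hb hab => ?_, fun h e he f hf hef hz => ?_⟩
  · exact h _ ha _ hb (fun h => hab (Sym2.congr_right.mp h))
      ⟨z, Sym2.mem_mk_left z a, Sym2.mem_mk_left z b⟩
  · obtain ⟨z, hze, hzf⟩ := hz
    obtain ⟨a, rfl⟩ := Sym2.mem_iff_exists.mp hze
    obtain ⟨b, rfl⟩ := Sym2.mem_iff_exists.mp hzf
    exact h he hf (by rintro rfl; exact hef rfl)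

theorem IsProperEdgeColoring.color_ne (hc : IsProperEdgeColoring G k c) {z a b : V}
    (ha : G.Adj z a) (hb : G.Adj z b) (hab : a ≠ b) : c s(z, a) ≠ c s(z, b) :=
  (isProperEdgeColoring_iff.mp hc).2 ha hb hab

theorem IsProperEdgeColoring.of_le (hc : IsProperEdgeColoring G k c) (h : G' ≤ G) :
    IsProperEdgeColoring G' k c :=
  isProperEdgeColoring_iff.mpr
    ⟨fun e he => hc.1 e (edgeSet_mono h he), fun _ _ _ ha hb => hc.color_ne (h ha) (h hb)⟩

theorem missing_subset_of_le (h : G' ≤ G) (v : V) : missing G k c v ⊆ missing G' k c v :=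
  fun _ ⟨hk, hne⟩ => ⟨hk, fun ⟨u, hu, hcu⟩ => hne ⟨u, h hu, hcu⟩⟩

theorem missing_congr {v : V} (h : ∀ u, G.Adj v u → c' s(v, u) = c s(v, u)) :
    missing G k c' v = missing G k c v := by
  ext β
  exact and_congr_right fun _ => not_congr
    ⟨fun ⟨u, hu, hcu⟩ => ⟨u, hu, (h u hu).symm.trans hcu⟩,
      fun ⟨u, hu, hcu⟩ => ⟨u, hu, (h u hu).trans hcu⟩⟩

theorem exists_mem_missing_of_encard_lt {v : V} (h : (G.neighborSet v).encard < k) :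
    ∃ β, β ∈ missing G k c v := by
  have hcover : ¬(Finset.Icc 1 k : Set ℕ) ⊆ (fun u => c s(v, u)) '' G.neighborSet v := by
    intro hsub
    have := (Set.encard_le_encard hsub).trans (Set.encard_image_le _ _)
    simp only [Set.encard_coe_eq_coe_finsetCard, Nat.card_Icc, add_tsub_cancel_right] at this
    exact (this.trans_lt h).false
  obtain ⟨β, hβ, hβc⟩ := Set.not_subset.mp hcover
  exact ⟨β, hβ, fun ⟨u, hu, hcu⟩ => hβc ⟨u, hu, hcu⟩⟩

theorem encard_neighborSet_deleteEdges_lt {x y : V} (hxy : G.Adj x y)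
    (hfin : (G.neighborSet x).Finite) :
    ((G.deleteEdges {s(x, y)}).neighborSet x).encard < (G.neighborSet x).encard := by
  exact (hfin.subset fun _ h => h.1).encard_lt_encard <|
    (Set.ssubset_iff_of_subset fun _ h => h.1).mpr
      ⟨y, hxy, fun h => ((deleteEdges_adj ..).mp h).2 rfl⟩

theorem IsProperEdgeColoring.update_of_deleteEdges [DecidableEq V] {a b : V} {β : ℕ}
    (hc : IsProperEdgeColoring (G.deleteEdges {s(a, b)}) k c)
    (ha : β ∈ missing (G.deleteEdges {s(a, b)}) k c a)
    (hb : β ∈ missing (G.deleteEdges {s(a, b)}) k c b) :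
    IsProperEdgeColoring G k (Function.update c s(a, b) β) := by
  have hdel : ∀ {z u}, G.Adj z u → s(z, u) ≠ s(a, b) → (G.deleteEdges {s(a, b)}).Adj z u :=
    fun h hne => (deleteEdges_adj ..).mpr ⟨h, hne⟩
  have hnew : ∀ {z u w}, s(z, u) = s(a, b) → G.Adj z w → s(z, w) ≠ s(a, b) →
      β ≠ c s(z, w) := by
    intro z u w hzu hw hne hβ
    rcases Sym2.mem_iff.mp (hzu ▸ Sym2.mem_mk_left z u) with rfl | rfl
    · exact ha.2 ⟨w, hdel hw hne, hβ.symm⟩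
    · exact hb.2 ⟨w, hdel hw hne, hβ.symm⟩
  refine isProperEdgeColoring_iff.mpr ⟨fun e he => ?_, fun z u w hu hw huw => ?_⟩
  · by_cases h : e = s(a, b)
    · subst h; simpa using ha.1
    · rw [Function.update_of_ne h]
      exact hc.1 e (by simp [he, h])
  · have hne : s(z, u) ≠ s(z, w) := fun h => huw (Sym2.congr_right.mp h)
    simp only [Function.update_apply]
    split_ifs with h₁ h₂ h₂
    · exact absurd (h₁.trans h₂.symm) hne
    · exact hnew h₁ hw h₂
    · exact (hnew h₂ hu h₁).symm
    · exact hc.color_ne (hdel hu h₁) (hdel hw h₂) huw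

theorem missing_update_of_notMem [DecidableEq V] {e : Sym2 V} {β : ℕ} {v : V} (hv : v ∉ e) :
    missing G k (Function.update c e β) v = missing G k c v :=
  missing_congr fun u _ =>
    Function.update_of_ne (fun h => hv (by rw [← h]; exact Sym2.mem_mk_left v u)) _ _

theorem IsProperEdgeColoring.mem_missing_update [DecidableEq V]
    (hc : IsProperEdgeColoring G k c) {a b : V} (hab : G.Adj a b) {β : ℕ}
    (hβ : β ∈ missing G k c a) :
    c s(a, b) ∈ missing G k (Function.update c s(a, b) β) a := by
  refine ⟨hc.1 _ (G.mem_edgeSet.mpr hab), fun ⟨u, hu, hcu⟩ => ?_⟩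
  rcases eq_or_ne u b with rfl | hub
  · rw [Function.update_self] at hcu
    exact hβ.2 ⟨u, hab, hcu.symm⟩
  · rw [Function.update_of_ne fun h => hub (Sym2.congr_right.mp h)] at hcu
    exact hc.color_ne hu hab hub hcu

theorem IsProperEdgeColoring.encard_neighborSet_le (hc : IsProperEdgeColoring G k c)
    (h : G' ≤ G) {z : V} {s : Set ℕ} (hs : ∀ t, G'.Adj z t → c s(z, t) ∈ s) :
    (G'.neighborSet z).encard ≤ s.encard := by
  have hinj : Set.InjOn (fun t => c s(z, t)) (G'.neighborSet z) :=
    fun a ha b hb hab => by_contra fun hne => hc.color_ne (h ha) (h hb) hne hab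
  rw [← hinj.encard_image]
  exact Set.encard_le_encard (Set.image_subset_iff.mpr hs)

end EdgeColoring

section Kempe

variable {V : Type*} {G : SimpleGraph V} {k : ℕ} {c : Sym2 V → ℕ} {α β : ℕ}

def kempeGraph (G : SimpleGraph V) (c : Sym2 V → ℕ) (α β : ℕ) : SimpleGraph V where
  Adj a b := G.Adj a b ∧ (c s(a, b) = α ∨ c s(a, b) = β)
  symm := ⟨fun _ _ h => ⟨h.1.symm, Sym2.eq_swap ▸ h.2⟩⟩
  loopless := ⟨fun a h => G.loopless.irrefl a h.1⟩

theorem kempeGraph_le : kempeGraph G c α β ≤ G := fun _ _ h => h.1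

/- The transposition is applied to every edge with both ends in the component of `v`; as it fixes
the other colours, this interchanges `α` and `β` on the `α/β`-chain through `v`. -/
open Classical in
noncomputable def kempeSwap (G : SimpleGraph V) (c : Sym2 V → ℕ) (α β : ℕ) (v : V)
    (e : Sym2 V) : ℕ :=
  if ∀ a ∈ e, (kempeGraph G c α β).Reachable v a then Equiv.swap α β (c e) else c e

theorem kempeSwap_apply_of_not_reachable {v z : V}
    (hz : ¬(kempeGraph G c α β).Reachable v z) (a : V) :
    kempeSwap G c α β v s(z, a) = c s(z, a) :=
  if_neg fun h => hz (h z (Sym2.mem_mk_left z a))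

open Classical in
theorem kempeSwap_apply_of_adj {v z a : V} (h : G.Adj z a) :
    kempeSwap G c α β v s(z, a) =
      if (kempeGraph G c α β).Reachable v z then Equiv.swap α β (c s(z, a)) else c s(z, a) := by
  by_cases hK : c s(z, a) = α ∨ c s(z, a) = β
  · have hza : (kempeGraph G c α β).Adj z a := ⟨h, hK⟩
    have hends : (∀ b ∈ s(z, a), (kempeGraph G c α β).Reachable v b) ↔
        (kempeGraph G c α β).Reachable v z := by
      simp only [Sym2.mem_iff, forall_eq_or_imp, forall_eq]
      exact ⟨And.left, fun hz => ⟨hz, hz.trans hza.reachable⟩⟩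
    simp only [kempeSwap, hends]
  · push Not at hK
    simp only [kempeSwap, Equiv.swap_apply_of_ne_of_ne hK.1 hK.2, ite_self]

theorem IsProperEdgeColoring.kempeSwap (hc : IsProperEdgeColoring G k c)
    (hα : α ∈ Finset.Icc 1 k) (hβ : β ∈ Finset.Icc 1 k) (v : V) :
    IsProperEdgeColoring G k (kempeSwap G c α β v) := by
  refine isProperEdgeColoring_iff.mpr ⟨fun e he => ?_, fun z a b ha hb hab => ?_⟩
  · unfold _root_.kempeSwap
    split_ifs
    · rw [Equiv.swap_apply_def]
      split_ifs
      exacts [hβ, hα, hc.1 e he]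
    · exact hc.1 e he
  · rw [kempeSwap_apply_of_adj ha, kempeSwap_apply_of_adj hb]
    split_ifs
    · exact (Equiv.swap α β).injective.ne (hc.color_ne ha hb hab)
    · exact hc.color_ne ha hb hab

theorem missing_kempeSwap_of_not_reachable {v u : V}
    (hu : ¬(kempeGraph G c α β).Reachable v u) :
    missing G k (kempeSwap G c α β v) u = missing G k c u :=
  missing_congr fun t _ => kempeSwap_apply_of_not_reachable hu t

theorem mem_missing_kempeSwap_of_reachable {v u : V} {γ : ℕ}
    (hu : (kempeGraph G c α β).Reachable v u) (hγ : γ ∈ Finset.Icc 1 k)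
    (h : Equiv.swap α β γ ∈ missing G k c u) : γ ∈ missing G k (kempeSwap G c α β v) u := by
  refine ⟨hγ, fun ⟨t, ht, hct⟩ => h.2 ⟨t, ht, ?_⟩⟩
  rw [kempeSwap_apply_of_adj ht, if_pos hu] at hct
  rw [← hct, Equiv.swap_apply_self]

theorem IsProperEdgeColoring.encard_neighborSet_kempeGraph_le_two
    (hc : IsProperEdgeColoring G k c) (z : V) :
    ((kempeGraph G c α β).neighborSet z).encard ≤ 2 :=
  (hc.encard_neighborSet_le kempeGraph_le (s := {α, β}) fun _ h => h.2).trans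
    ((Set.encard_insert_le _ _).trans (by simp; norm_num))

theorem IsProperEdgeColoring.encard_neighborSet_kempeGraph_le_one
    (hc : IsProperEdgeColoring G k c) {z : V}
    (hz : α ∈ missing G k c z ∨ β ∈ missing G k c z) :
    ((kempeGraph G c α β).neighborSet z).encard ≤ 1 := by
  rcases hz with hz | hz
  · refine (hc.encard_neighborSet_le kempeGraph_le (s := {β}) fun t h => ?_).trans_eq
      (Set.encard_singleton β)
    exact h.2.resolve_left fun hα => hz.2 ⟨t, h.1, hα⟩
  · refine (hc.encard_neighborSet_le kempeGraph_le (s := {α}) fun t h => ?_).trans_eq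
      (Set.encard_singleton α)
    exact h.2.resolve_right fun hβ => hz.2 ⟨t, h.1, hβ⟩

end Kempe

namespace SimpleGraph

variable {V : Type*} {S : SimpleGraph V}

theorem Reachable.mem_of_forall_adj {s : Set V} (hs : ∀ ⦃a b⦄, a ∈ s → S.Adj a b → b ∈ s)
    {a b : V} (hab : S.Reachable a b) (ha : a ∈ s) : b ∈ s := by
  obtain ⟨q⟩ := hab
  induction q with
  | nil => exact ha
  | cons h _ ih => exact ih (hs ha h)

theorem Walk.IsPath.mem_support_of_adj {u w : V} {p : S.Walk u w} (hp : p.IsPath) (huw : u ≠ w)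
    (hdeg : ∀ z, (S.neighborSet z).encard ≤ 2) (hu : (S.neighborSet u).encard ≤ 1)
    (hw : (S.neighborSet w).encard ≤ 1) {z t : V} (hz : z ∈ p.support) (hzt : S.Adj z t) :
    t ∈ p.support := by
  have hfin : (p.toSubgraph.neighborSet z).Finite := p.finite_neighborSet_toSubgraph
  suffices S.neighborSet z ⊆ p.toSubgraph.neighborSet z from
    p.mem_verts_toSubgraph.mp (p.toSubgraph.neighborSet_subset_verts z (this hzt))
  -- The path supplies two neighbours of an inner vertex and one of an end: all there are.
  refine (hfin.eq_of_subset_of_encard_le (p.toSubgraph.neighborSet_subset z) ?_).symm.subset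
  have hnil : ¬p.Nil := Walk.not_nil_of_ne huw
  obtain ⟨i, rfl, hi⟩ := Walk.mem_support_iff_exists_getVert.mp hz
  rcases Nat.eq_zero_or_pos i with rfl | hi0
  · rw [Walk.getVert_zero]
    exact hu.trans (Set.one_le_encard_iff_nonempty.mpr ⟨p.snd, p.toSubgraph_adj_snd hnil⟩)
  rcases hi.eq_or_lt with rfl | hil
  · rw [Walk.getVert_length]
    exact hw.trans (Set.one_le_encard_iff_nonempty.mpr
      ⟨p.penultimate, (p.toSubgraph_adj_penultimate hnil).symm⟩)
  · rw [← hfin.cast_ncard_eq, hp.ncard_neighborSet_toSubgraph_internal_eq_two hi0.ne' hil]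
    exact hdeg _

theorem not_reachable_of_encard_neighborSet_le_one (hdeg : ∀ z, (S.neighborSet z).encard ≤ 2)
    {x u w : V} (hx : (S.neighborSet x).encard ≤ 1) (hu : (S.neighborSet u).encard ≤ 1)
    (hw : (S.neighborSet w).encard ≤ 1) (hxu : x ≠ u) (hxw : x ≠ w) (huw : u ≠ w)
    (hux : S.Reachable u x) : ¬S.Reachable w x := by
  intro hwx
  obtain ⟨q, hq⟩ := (hux.trans hwx.symm).exists_isPath
  have hxq : x ∈ q.support := hux.mem_of_forall_adj
    (fun _ _ ha hab => hq.mem_support_of_adj huw hdeg hu hw ha hab) q.start_mem_support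
  obtain ⟨i, rfl, hi⟩ := Walk.mem_support_iff_exists_getVert.mp hxq
  have hi0 : i ≠ 0 := by rintro rfl; exact hxu q.getVert_zero
  have hil : i < q.length := hi.lt_of_ne (by rintro rfl; exact hxw q.getVert_length)
  have htwo : (2 : ℕ∞) ≤ 1 := calc
    (2 : ℕ∞) = (q.toSubgraph.neighborSet (q.getVert i)).encard := by
      rw [← q.finite_neighborSet_toSubgraph.cast_ncard_eq,
        hq.ncard_neighborSet_toSubgraph_internal_eq_two hi0 hil]
      rfl
    _ ≤ (S.neighborSet (q.getVert i)).encard :=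
      Set.encard_le_encard (q.toSubgraph.neighborSet_subset _)
    _ ≤ 1 := hx
  exact absurd htwo (by norm_num)

end SimpleGraph

section MultiFan

variable {V : Type*} {G : SimpleGraph V} {k : ℕ} {c c' : Sym2 V → ℕ} {x : V}

/- Only the colour condition; that the `x (y i)` are distinct edges is part of
`IsCriticalMultiFan`. -/
def IsMultiFan (G : SimpleGraph V) (k : ℕ) (c : Sym2 V → ℕ) (x : V) {n : ℕ}
    (y : Fin (n + 1) → V) : Prop :=
  ∀ i : Fin (n + 1), 0 < (i : ℕ) → ∃ j : Fin (n + 1), (j : ℕ) < i ∧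
    c s(x, y i) ∈ missing G k c (y j)

theorem IsMultiFan.castLE {m n : ℕ} {y : Fin (n + 1) → V} (hy : IsMultiFan G k c x y)
    (h : m + 1 ≤ n + 1) : IsMultiFan G k c x (y ∘ Fin.castLE h) := fun i hi => by
  obtain ⟨j, hj, hmem⟩ := hy (Fin.castLE h i) hi
  exact ⟨⟨j, hj.trans i.isLt⟩, hj, hmem⟩

theorem IsMultiFan.recolor {n : ℕ} {y : Fin (n + 1) → V} (hy : IsMultiFan G k c x y)
    (hx : ∀ i, c' s(x, y i) = c s(x, y i))
    (hmiss : ∀ i j : Fin (n + 1), (j : ℕ) < i → c s(x, y i) ∈ missing G k c (y j) →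
      c s(x, y i) ∈ missing G k c' (y j)) :
    IsMultiFan G k c' x y := fun i hi => by
  obtain ⟨j, hj, hmem⟩ := hy i hi
  exact ⟨j, hj, hx i ▸ hmiss i j hj hmem⟩

theorem IsMultiFan.kempeSwap {n : ℕ} {y : Fin (n + 1) → V} (hy : IsMultiFan G k c x y)
    (hadj : ∀ i : Fin (n + 1), 0 < (i : ℕ) → G.Adj x (y i)) {α β : ℕ} {v : V}
    (hx : ¬(kempeGraph G c α β).Reachable v x) (hβ : β ∈ missing G k c x)
    (hα : ∀ j : Fin (n + 1), (j : ℕ) < n → α ∈ missing G k c (y j) →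
      ¬(kempeGraph G c α β).Reachable v (y j)) :
    IsMultiFan G k (kempeSwap G c α β v) x y := by
  refine hy.recolor (fun i => kempeSwap_apply_of_not_reachable hx _) fun i j hji hmem => ?_
  by_cases hj : (kempeGraph G c α β).Reachable v (y j)
  · have hγβ : c s(x, y i) ≠ β := fun h => hβ.2 ⟨y i, hadj i (by omega), h⟩
    have hγα : c s(x, y i) ≠ α := fun h => hα j (by omega) (h ▸ hmem) hj
    refine mem_missing_kempeSwap_of_reachable hj hmem.1 ?_
    rwa [Equiv.swap_apply_of_ne_of_ne hγα hγβ]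
  · rwa [missing_kempeSwap_of_not_reachable hj]

structure IsCriticalMultiFan (G : SimpleGraph V) (k : ℕ) (c : Sym2 V → ℕ) (x y₀ : V) {n : ℕ}
    (y : Fin (n + 1) → V) : Prop where
  zero : y 0 = y₀
  adj : ∀ i, G.Adj x (y i)
  injective : Function.Injective y
  proper : IsProperEdgeColoring (G.deleteEdges {s(x, y₀)}) k c
  fan : IsMultiFan (G.deleteEdges {s(x, y₀)}) k c x y

variable {y₀ : V} {n : ℕ} {y : Fin (n + 1) → V}

theorem IsCriticalMultiFan.castLE (hF : IsCriticalMultiFan G k c x y₀ y) {m : ℕ}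
    (h : m + 1 ≤ n + 1) : IsCriticalMultiFan G k c x y₀ (y ∘ Fin.castLE h) where
  zero := by simpa using hF.zero
  adj _ := hF.adj _
  injective := hF.injective.comp (Fin.castLE_injective h)
  proper := hF.proper
  fan := hF.fan.castLE h

theorem IsCriticalMultiFan.adj_deleteEdges (hF : IsCriticalMultiFan G k c x y₀ y)
    {i : Fin (n + 1)} (hi : 0 < (i : ℕ)) : (G.deleteEdges {s(x, y₀)}).Adj x (y i) := by
  refine (deleteEdges_adj ..).mpr ⟨hF.adj i, fun h => hi.ne' ?_⟩
  rw [← hF.zero, Set.mem_singleton_iff, Sym2.congr_right] at h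
  exact congrArg Fin.val (hF.injective h)

theorem IsCriticalMultiFan.disjoint_missing_last (hG : ¬EdgeColorable G k) :
    ∀ {n : ℕ} {y : Fin (n + 1) → V} {c : Sym2 V → ℕ}, IsCriticalMultiFan G k c x y₀ y →
      Disjoint (missing (G.deleteEdges {s(x, y₀)}) k c x)
        (missing (G.deleteEdges {s(x, y₀)}) k c (y (Fin.last n))) := by
  classical
  intro n
  induction n using Nat.strong_induction_on with
  | _ n ih =>
  intro y c hF
  rw [Set.disjoint_left]
  intro β hβx hβy
  rcases n with _ | n
  · exact hG ⟨_, hF.proper.update_of_deleteEdges hβx (hF.zero ▸ hβy)⟩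
  obtain ⟨j, hj, hγj⟩ := hF.fan (Fin.last (n + 1)) (by simp)
  set e := s(x, y (Fin.last (n + 1)))
  have hnot : ∀ i : Fin (n + 2), (i : ℕ) < n + 1 → y i ∉ e := fun i hi => by
    simp only [e, Sym2.mem_iff, not_or]
    exact ⟨(hF.adj i).ne', hF.injective.ne (Fin.ne_of_val_ne (by simp; omega))⟩
  have hle := deleteEdges_le (G := G.deleteEdges {s(x, y₀)}) {e}
  have hF' : IsCriticalMultiFan G k (Function.update c e β) x y₀ (y ∘ Fin.castLE j.isLt) :=
    { hF.castLE j.isLt with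
      proper := (hF.proper.of_le hle).update_of_deleteEdges (missing_subset_of_le hle _ hβx)
        (missing_subset_of_le hle _ hβy)
      fan := (hF.fan.castLE j.isLt).recolor
        (fun i => Function.update_of_ne (fun h => hnot _ (by simp; omega)
          (h ▸ Sym2.mem_mk_right x _)) _ _)
        fun i j' _ hmem => by
          rw [Function.comp_apply, missing_update_of_notMem (hnot _ (by simp; omega))]
          exact hmem }
  have hγx := hF.proper.mem_missing_update (hF.adj_deleteEdges (i := Fin.last _) (by simp)) hβx
  rw [← missing_update_of_notMem (β := β) (hnot j (by omega))] at hγj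
  exact Set.disjoint_left.mp (ih j hj hF') hγx hγj

end MultiFan

section CriticalMultiFan

variable {V : Type*} {G : SimpleGraph V} {k : ℕ} {c : Sym2 V → ℕ} {x y₀ : V} {n : ℕ}

theorem IsCriticalMultiFan.disjoint_missing {y : Fin (n + 1) → V}
    (hF : IsCriticalMultiFan G k c x y₀ y) (hG : ¬EdgeColorable G k) (i : Fin (n + 1)) :
    Disjoint (missing (G.deleteEdges {s(x, y₀)}) k c x)
      (missing (G.deleteEdges {s(x, y₀)}) k c (y i)) :=
  (hF.castLE i.isLt).disjoint_missing_last hG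

theorem IsCriticalMultiFan.reachable_kempeGraph {y : Fin (n + 1) → V}
    (hF : IsCriticalMultiFan G k c x y₀ y) (hG : ¬EdgeColorable G k) {α β : ℕ}
    (hβ : β ∈ missing (G.deleteEdges {s(x, y₀)}) k c x) {m : Fin (n + 1)}
    (hα : α ∈ missing (G.deleteEdges {s(x, y₀)}) k c (y m))
    (hα_lt : ∀ j : Fin (n + 1), (j : ℕ) < m → α ∈ missing (G.deleteEdges {s(x, y₀)}) k c (y j) →
      (kempeGraph (G.deleteEdges {s(x, y₀)}) c α β).Reachable (y j) x) :
    (kempeGraph (G.deleteEdges {s(x, y₀)}) c α β).Reachable (y m) x := by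
  set H := G.deleteEdges {s(x, y₀)}
  by_contra hmx
  have hF' : IsCriticalMultiFan G k (kempeSwap H c α β (y m)) x y₀ (y ∘ Fin.castLE m.isLt) :=
    { hF.castLE m.isLt with
      proper := hF.proper.kempeSwap hα.1 hβ.1 _
      fan := (hF.castLE m.isLt).fan.kempeSwap
        (fun _ hi => (hF.castLE m.isLt).adj_deleteEdges hi) hmx hβ
        fun j hj hαj hr => hmx (hr.trans (hα_lt _ hj hαj)) }
  have hβx : β ∈ missing H k (kempeSwap H c α β (y m)) x := by
    rwa [missing_kempeSwap_of_not_reachable hmx]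
  have hβm : β ∈ missing H k (kempeSwap H c α β (y m)) (y m) :=
    mem_missing_kempeSwap_of_reachable (Reachable.refl _) hβ.1 (by rwa [Equiv.swap_apply_right])
  exact Set.disjoint_left.mp (hF'.disjoint_missing_last hG) hβx hβm

theorem IsCriticalMultiFan.disjoint_missing_castSucc_last {y : Fin (n + 2) → V}
    (hF : IsCriticalMultiFan G k c x y₀ y) (hG : ¬EdgeColorable G k)
    (hk : (G.neighborSet x).encard ≤ k)
    (hpre : Pairwise fun i j : Fin (n + 1) => Disjoint
      (missing (G.deleteEdges {s(x, y₀)}) k c (y i.castSucc))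
      (missing (G.deleteEdges {s(x, y₀)}) k c (y j.castSucc)))
    (a : Fin (n + 1)) :
    Disjoint (missing (G.deleteEdges {s(x, y₀)}) k c (y a.castSucc))
      (missing (G.deleteEdges {s(x, y₀)}) k c (y (Fin.last (n + 1)))) := by
  set H := G.deleteEdges {s(x, y₀)}
  rw [Set.disjoint_left]
  intro α hαa hαb
  obtain ⟨β, hβx⟩ : ∃ β, β ∈ missing H k c x := exists_mem_missing_of_encard_lt <|
    (encard_neighborSet_deleteEdges_lt (hF.zero ▸ hF.adj 0)
      (Set.finite_of_encard_le_coe hk)).trans_le hk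
  have hα_uniq : ∀ j : Fin (n + 2), (j : ℕ) < n + 1 → α ∈ missing H k c (y j) → j = a.castSucc :=
    fun j hj hαj => by
      have : (⟨j, hj⟩ : Fin (n + 1)) = a := hpre.eq fun h => Set.disjoint_left.mp h hαj hαa
      rw [← this]
      rfl
  have hax : (kempeGraph H c α β).Reachable (y a.castSucc) x :=
    hF.reachable_kempeGraph hG hβx hαa fun j hj hαj =>
      absurd (hα_uniq j (by simp at hj; omega) hαj) (Fin.ne_of_lt hj)
  have hbx : (kempeGraph H c α β).Reachable (y (Fin.last (n + 1))) x :=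
    hF.reachable_kempeGraph hG hβx hαb fun j hj hαj => hα_uniq j hj hαj ▸ hax
  exact not_reachable_of_encard_neighborSet_le_one
    hF.proper.encard_neighborSet_kempeGraph_le_two
    (hF.proper.encard_neighborSet_kempeGraph_le_one (Or.inr hβx))
    (hF.proper.encard_neighborSet_kempeGraph_le_one (Or.inl hαa))
    (hF.proper.encard_neighborSet_kempeGraph_le_one (Or.inl hαb))
    (hF.adj _).ne (hF.adj _).ne (hF.injective.ne (Fin.castSucc_lt_last a).ne) hax hbx

theorem IsCriticalMultiFan.pairwise_disjoint_missing (hG : ¬EdgeColorable G k)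
    (hk : (G.neighborSet x).encard ≤ k) :
    ∀ {n : ℕ} {y : Fin (n + 1) → V}, IsCriticalMultiFan G k c x y₀ y →
      Pairwise fun i j => Disjoint (missing (G.deleteEdges {s(x, y₀)}) k c (y i))
        (missing (G.deleteEdges {s(x, y₀)}) k c (y j))
  | 0, _, _ => fun i j hij => absurd (Fin.ext (by omega)) hij
  | n + 1, y, hF => by
    have hpre := pairwise_disjoint_missing hG hk (hF.castLE (Nat.le_succ _))
    intro i j hij
    rcases Fin.eq_castSucc_or_eq_last i with ⟨i, rfl⟩ | rfl <;>
      rcases Fin.eq_castSucc_or_eq_last j with ⟨j, rfl⟩ | rfl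
    · exact hpre fun h => hij (congrArg _ h)
    · exact hF.disjoint_missing_castSucc_last hG hk hpre i
    · exact (hF.disjoint_missing_castSucc_last hG hk hpre j).symm
    · exact absurd rfl hij

end CriticalMultiFan

theorem stmt_6_general {V : Type*} [Fintype V] (G : SimpleGraph V) [DecidableRel G.Adj]
    (hclass2 : chromIndex G = G.maxDegree + 1) (x : V) (p : ℕ) (y : Fin (p + 1) → V)
    (hadj : ∀ i, G.Adj x (y i)) (hinj : Function.Injective y)
    (c : Sym2 V → ℕ)
    (hc : IsProperEdgeColoring (G.deleteEdges {s(x, y 0)}) G.maxDegree c)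
    (hfan : ∀ i : Fin (p + 1), 0 < (i : ℕ) → ∃ j : Fin (p + 1), (j : ℕ) < (i : ℕ) ∧
      c s(x, y i) ∈ missing (G.deleteEdges {s(x, y 0)}) G.maxDegree c (y j)) :
    ∀ u w, u ∈ insert x (Set.range y) → w ∈ insert x (Set.range y) → u ≠ w →
      missing (G.deleteEdges {s(x, y 0)}) G.maxDegree c u ∩
        missing (G.deleteEdges {s(x, y 0)}) G.maxDegree c w = ∅ := by
  have hG : ¬EdgeColorable G G.maxDegree := fun h => by
    have := Nat.sInf_le (show G.maxDegree ∈ {k | EdgeColorable G k} from h)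
    rw [← chromIndex, hclass2] at this
    omega
  have hk : (G.neighborSet x).encard ≤ G.maxDegree := by
    rw [← coe_neighborFinset, Set.encard_coe_eq_coe_finsetCard, card_neighborFinset_eq_degree]
    exact_mod_cast G.degree_le_maxDegree x
  have hF : IsCriticalMultiFan G G.maxDegree c x (y 0) y := ⟨rfl, hadj, hinj, hc, hfan⟩
  rintro u w (rfl | ⟨i, rfl⟩) (rfl | ⟨j, rfl⟩) huw <;> rw [← Set.disjoint_iff_inter_eq_empty]
  · exact absurd rfl huw
  · exact hF.disjoint_missing hG j
  · exact (hF.disjoint_missing hG i).symm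
  · exact hF.pairwise_disjoint_missing hG hk fun h => huw (congrArg y h)

/-- if `G` is Class 2 with critical edge `e₁ = x(y 0)`, `c` is a proper
`Δ`-edge-coloring of `G − e₁`, and `(x, e₁, y 0, …, y p)` is a multi-fan at `x` (distinct
edges `x(y i)`, and for `i ≥ 1` the color of `x(y i)` is missing at some earlier `y j`),
then the vertex set of the fan is elementary: missing color sets of distinct fan vertices
are disjoint. -/
theorem stmt_6 {V : Type*} [Fintype V] (G : SimpleGraph V) [DecidableRel G.Adj]
    (hclass2 : chromIndex G = G.maxDegree + 1) (x : V) (p : ℕ) (y : Fin (p + 1) → V)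
    (hadj : ∀ i, G.Adj x (y i)) (hinj : Function.Injective y)
    (hcrit : chromIndex (G.deleteEdges {s(x, y 0)}) < chromIndex G)
    (c : Sym2 V → ℕ)
    (hc : IsProperEdgeColoring (G.deleteEdges {s(x, y 0)}) G.maxDegree c)
    (hfan : ∀ i : Fin (p + 1), 0 < (i : ℕ) → ∃ j : Fin (p + 1), (j : ℕ) < (i : ℕ) ∧
      c s(x, y i) ∈ missing (G.deleteEdges {s(x, y 0)}) G.maxDegree c (y j)) :
    ∀ u w, u ∈ insert x (Set.range y) → w ∈ insert x (Set.range y) → u ≠ w →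
      missing (G.deleteEdges {s(x, y 0)}) G.maxDegree c u ∩
        missing (G.deleteEdges {s(x, y 0)}) G.maxDegree c w = ∅ :=
  stmt_6_general G hclass2 x p y hadj hinj c hc hfan
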